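/- arXiv:1904.10029 — 3 statements merged into one kernel-verified Lean document; each statement's English description precedes it below -/
import Mathlib

section
/- Let ℓ ≥ 3 and let α be a real number. If u is an infinite word over an ℓ-letter alphabet A that is ordinary α⁺-free, then the infinite word v over the 3ℓ-letter alphabet A × {0,1,2} defined by v(n) = (u(n), n mod 3) is undirected α⁺-free. -/
/-- `x` is a (finite, contiguous) factor of the infinite word `w`. -/
def InfFactor {A : Type*} (x : List A) (w : ℕ → A) : Prop :=
  ∃ i : ℕ, x = (List.range x.length).map fun j => w (i + j)

/-- `z` is an undirected `r`-power: `z = x ++ y ++ x'` with `x` nonempty,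
`x' = x` or `x' = x.reverse`, and `|x y x'| / |x y| = r`. -/
def IsUndirectedPow {A : Type*} (r : ℚ) (z : List A) : Prop :=
  ∃ x y x' : List A, z = x ++ y ++ x' ∧ x ≠ [] ∧ (x' = x ∨ x' = x.reverse) ∧
    (z.length : ℚ) = r * ((x.length : ℚ) + (y.length : ℚ))

/-- `z` is an ordinary `r`-power: `z = x ++ y ++ x` with `x` nonempty and `|x y x| / |x y| = r`. -/
def IsOrdinaryPow {A : Type*} (r : ℚ) (z : List A) : Prop :=
  ∃ x y : List A, z = x ++ y ++ x ∧ x ≠ [] ∧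
    (z.length : ℚ) = r * ((x.length : ℚ) + (y.length : ℚ))

/-- The infinite word `w` is undirected `α`-free: no factor of `w` is an undirected
`r`-power with rational `r ≥ α` (where `1 < r ≤ 2`). -/
def UndirectedFree {A : Type*} (α : ℝ) (w : ℕ → A) : Prop :=
  ∀ z : List A, InfFactor z w →
    ∀ r : ℚ, 1 < r → r ≤ 2 → α ≤ (r : ℝ) → ¬ IsUndirectedPow r z

/-- The infinite word `w` is undirected `α⁺`-free: no factor of `w` is an undirected
`r`-power with rational `r > α` (where `1 < r ≤ 2`). -/
def UndirectedPlusFree {A : Type*} (α : ℝ) (w : ℕ → A) : Prop :=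
  ∀ z : List A, InfFactor z w →
    ∀ r : ℚ, 1 < r → r ≤ 2 → α < (r : ℝ) → ¬ IsUndirectedPow r z

/-- The infinite word `w` is (ordinary) `α`-free. -/
def OrdinaryFree {A : Type*} (α : ℝ) (w : ℕ → A) : Prop :=
  ∀ z : List A, InfFactor z w →
    ∀ r : ℚ, 1 < r → r ≤ 2 → α ≤ (r : ℝ) → ¬ IsOrdinaryPow r z

/-- The infinite word `w` is (ordinary) `α⁺`-free. -/
def OrdinaryPlusFree {A : Type*} (α : ℝ) (w : ℕ → A) : Prop :=
  ∀ z : List A, InfFactor z w →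
    ∀ r : ℚ, 1 < r → r ≤ 2 → α < (r : ℝ) → ¬ IsOrdinaryPow r z

/-- The undirected repetition threshold for `k` letters: the infimum of the set of
rationals `r ∈ (1, 2]` such that undirected `r`-powers are `k`-avoidable. -/
noncomputable def URT (k : ℕ) : ℝ :=
  sInf {a : ℝ | ∃ r : ℚ, a = (r : ℝ) ∧ 1 < r ∧ r ≤ 2 ∧
    ∃ w : ℕ → Fin k, UndirectedFree (r : ℝ) w}

/-- The (ordinary) repetition threshold for `k` letters. -/
noncomputable def RT (k : ℕ) : ℝ :=
  sInf {a : ℝ | ∃ r : ℚ, a = (r : ℝ) ∧ 1 < r ∧ r ≤ 2 ∧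
    ∃ w : ℕ → Fin k, OrdinaryFree (r : ℝ) w}

/-!
A factor of the labelled word that is an ordinary power projects to an ordinary power in `u` with
the same exponent. A reversed repetition `x y xᴿ` with `|x| ≥ 2` is impossible: the mirror positions
`m - 1 ↔ m + k` and `m - 2 ↔ m + k + 1` carry equal letters, hence equal residues mod 3, which
forces `3 ∣ k + 1` and `3 ∣ k + 3`. When `|x| ≤ 1`, `xᴿ = x` and the power is ordinary.
-/

section

variable {A B : Type*}

theorem InfFactor.map {z : List A} {w : ℕ → A} (f : A → B) (h : InfFactor z w) :
    InfFactor (z.map f) (f ∘ w) := by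
  obtain ⟨i, hz⟩ := h
  refine ⟨i, ?_⟩
  nth_rewrite 1 [hz]
  simp

theorem InfFactor.exists_getElem_eq {z : List A} {w : ℕ → A} (h : InfFactor z w) :
    ∃ i, ∀ n (hn : n < z.length), z[n] = w (i + n) := by
  obtain ⟨i, hz⟩ := h
  exact ⟨i, fun n hn => by rw [List.getElem_of_eq hz hn]; simp⟩

theorem InfFactor.mirror {x y : List A} {w : ℕ → A} (h : InfFactor (x ++ y ++ x.reverse) w) :
    ∃ i, ∀ j < x.length,
      w (i + (x.length - 1 - j)) = w (i + (x.length + y.length + j)) := by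
  obtain ⟨i, hi⟩ := h.exists_getElem_eq
  refine ⟨i, fun j hj => ?_⟩
  rw [← hi _ (by simp; omega), ← hi _ (by simp; omega), List.getElem_append_left (by simp; omega),
    List.getElem_append_left (by omega), List.getElem_append_right (by simp),
    List.getElem_reverse]
  congr 1
  simp only [List.length_append]
  omega

theorem IsOrdinaryPow.map {r : ℚ} {z : List A} (f : A → B) (h : IsOrdinaryPow r z) :
    IsOrdinaryPow r (z.map f) := by
  obtain ⟨x, y, rfl, hx, hlen⟩ := h
  exact ⟨x.map f, y.map f, by simp, by simpa using hx, by simpa using hlen⟩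

theorem IsUndirectedPow.isOrdinaryPow_or {r : ℚ} {z : List A} (h : IsUndirectedPow r z) :
    IsOrdinaryPow r z ∨ ∃ x y : List A, z = x ++ y ++ x.reverse ∧ 2 ≤ x.length := by
  obtain ⟨x, y, x', rfl, hx, rfl | rfl, hlen⟩ := h
  · exact Or.inl ⟨_, _, rfl, hx, hlen⟩
  · rcases Nat.lt_or_ge x.length 2 with hshort | hlong
    · have hrev : x.reverse = x := by
        rcases x with _ | ⟨_, _ | ⟨_, _⟩⟩ <;> simp_all
      rw [hrev] at hlen ⊢
      exact Or.inl ⟨x, y, rfl, hx, hlen⟩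
    · exact Or.inr ⟨x, y, rfl, hlong⟩

theorem OrdinaryPlusFree.of_comp {α : ℝ} {w : ℕ → A} (f : A → B)
    (h : OrdinaryPlusFree α (f ∘ w)) : OrdinaryPlusFree α w :=
  fun _ hz r hr1 hr2 hαr hpow => h _ (hz.map f) r hr1 hr2 hαr (hpow.map f)

theorem InfFactor.not_reverse_of_modEq {p : ℕ} (hp : 3 ≤ p) {w : ℕ → A}
    (hw : ∀ m n, w m = w n → m ≡ n [MOD p]) {x y : List A} (hx : 2 ≤ x.length) :
    ¬ InfFactor (x ++ y ++ x.reverse) w := by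
  intro h
  obtain ⟨i, hi⟩ := h.mirror
  have hinner := Nat.modEq_iff_dvd.mp (hw _ _ (hi 0 (by omega)))
  have hnext := Nat.modEq_iff_dvd.mp (hw _ _ (hi 1 (by omega)))
  have hdvd : (p : ℤ) ∣ 2 := by
    convert Int.dvd_sub hnext hinner using 1
    omega
  have hle := Int.le_of_dvd (by norm_num) hdvd
  omega

end

theorem directProduct_undirectedPlusFree {A : Type*} (α : ℝ) (u : ℕ → A)
    (hu : OrdinaryPlusFree α u) :
    UndirectedPlusFree α
      (fun n => ((u n, (⟨n % 3, Nat.mod_lt n (by norm_num)⟩ : Fin 3)) : A × Fin 3)) := by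
  intro z hz r hr1 hr2 hαr hpow
  rcases hpow.isOrdinaryPow_or with hord | ⟨x, y, rfl, hx⟩
  · exact hu.of_comp Prod.fst z hz r hr1 hr2 hαr hord
  · refine hz.not_reverse_of_modEq le_rfl (fun m n hmn => ?_) hx
    exact congrArg (fun q => q.2.val) hmn
end

section
/- Every reversible factor of f^ω(0) has length at most 18; that is, if a word x and its reversal are both factors of f^ω(0), then |x| ≤ 18. -/
/-- The 24-uniform morphism `f` on `{0,1,2}`:
`f(0) = 012021201021012102120210`, `f(1) = 120102012102120210201021`,
`f(2) = 201210120210201021012102`. -/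
def fMorph : Fin 3 → List (Fin 3)
  | 0 => [0,1,2,0,2,1,2,0,1,0,2,1,0,1,2,1,0,2,1,2,0,2,1,0]
  | 1 => [1,2,0,1,0,2,0,1,2,1,0,2,1,2,0,2,1,0,2,0,1,0,2,1]
  | 2 => [2,0,1,2,1,0,1,2,0,2,1,0,2,0,1,0,2,1,0,1,2,1,0,2]

/-- The infinite fixed point `f^ω(0)` of `fMorph` starting with `0`: its letter at
position `n` is the `(n mod 24)`-th letter of the image under `f` of its letter at
position `n / 24` (its prefix of length `24^n` is `f^n(0)` for every `n`). -/
def fOmega : ℕ → Fin 3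
  | 0 => 0
  | n + 1 => (fMorph (fOmega ((n + 1) / 24))).getD ((n + 1) % 24) 0
  decreasing_by exact Nat.div_lt_self (Nat.succ_pos n) (by norm_num)

/-!
A factor of length at most `k + 1` of a fixed point of a `k`-uniform morphism `g` is a window,
starting at an offset below `k`, of some `g a ++ g b`. For `f` and length `19` there are only
`9 · 24` such windows, and a direct check shows that none is the reversal of another. Since the
length-`19` prefix of a reversible factor is again reversible, reversible factors have length at
most `18`.
-/

namespace InfFactor

variable {A : Type*} {x : List A} {w : ℕ → A}

theorem iff_getElem : InfFactor x w ↔ ∃ i, ∀ j (h : j < x.length), x[j] = w (i + j) := by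
  constructor
  · rintro ⟨i, hi⟩
    exact ⟨i, fun j h => by rw [List.getElem_of_eq hi h, List.getElem_map, List.getElem_range]⟩
  · rintro ⟨i, hi⟩
    exact ⟨i, List.ext_getElem (by simp) fun j h _ => by simpa using hi j h⟩

theorem take (n : ℕ) (hx : InfFactor x w) : InfFactor (x.take n) w := by
  obtain ⟨i, hi⟩ := iff_getElem.1 hx
  exact iff_getElem.2 ⟨i, fun j h => by
    rw [List.getElem_take]
    exact hi j (by simp at h; omega)⟩

theorem drop (n : ℕ) (hx : InfFactor x w) : InfFactor (x.drop n) w := by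
  obtain ⟨i, hi⟩ := iff_getElem.1 hx
  exact iff_getElem.2 ⟨i + n, fun j h => by
    rw [List.getElem_drop, add_assoc]
    exact hi (n + j) (by simp at h; omega)⟩

end InfFactor

section UniformFixedPoint

variable {A : Type*} {w : ℕ → A} {k : ℕ} {g : A → List A} {d : A}
  (hg : ∀ a, (g a).length = k) (hw : ∀ n, w n = (g (w (n / k))).getD (n % k) d)
include hg hw

theorem apply_mul_add_eq_getElem_append {q m : ℕ} (hm : m < 2 * k) :
    w (k * q + m) = (g (w q) ++ g (w (q + 1)))[m]'(by simp [hg]; omega) := by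
  have hk : 0 < k := by omega
  rw [hw]
  rcases lt_or_ge m k with hmk | hmk
  · rw [List.getElem_append_left (by rw [hg]; exact hmk), Nat.mul_add_div hk,
      Nat.div_eq_of_lt hmk, Nat.mul_add_mod, Nat.mod_eq_of_lt hmk, add_zero,
      List.getD_eq_getElem]
  · obtain ⟨m', rfl⟩ := Nat.exists_eq_add_of_le hmk
    rw [List.getElem_append_right (by rw [hg]; omega),
      show k * q + (k + m') = k * (q + 1) + m' by ring, Nat.mul_add_div hk,
      Nat.div_eq_of_lt (by omega), Nat.mul_add_mod, Nat.mod_eq_of_lt (by omega), add_zero,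
      List.getD_eq_getElem _ _ (by rw [hg]; omega)]
    simp [hg]

theorem InfFactor.exists_eq_take_drop_append {x : List A} (hk : 0 < k) (hx : InfFactor x w)
    (hlen : x.length ≤ k + 1) : ∃ a b, ∃ r < k, x = ((g a ++ g b).drop r).take x.length := by
  obtain ⟨i, hi⟩ := InfFactor.iff_getElem.1 hx
  have hik : i % k < k := Nat.mod_lt i hk
  refine ⟨w (i / k), w (i / k + 1), i % k, hik,
    List.ext_getElem (by simp [hg]; omega) fun j hj _ => ?_⟩
  rw [hi j hj, show i + j = k * (i / k) + (i % k + j) by rw [← add_assoc, Nat.div_add_mod],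
    apply_mul_add_eq_getElem_append hg hw (by omega)]
  simp

end UniformFixedPoint

theorem length_fMorph (a : Fin 3) : (fMorph a).length = 24 := by
  fin_cases a <;> rfl

theorem fOmega_eq_getD (n : ℕ) : fOmega n = (fMorph (fOmega (n / 24))).getD (n % 24) 0 := by
  cases n with
  | zero => simp [fOmega.eq_1, fMorph]
  | succ n => rw [fOmega]

theorem fMorph_windows_ne_reverse : ∀ a b a' b' : Fin 3, ∀ r < 24, ∀ r' < 24,
    ((fMorph a ++ fMorph b).drop r).take 19 ≠
      (((fMorph a' ++ fMorph b').drop r').take 19).reverse := by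
  decide

/-- Every reversible factor of `f^ω(0)` has length at most 18: if a word `x` and its
reversal are both factors of `f^ω(0)`, then `|x| ≤ 18`. -/
theorem fOmega_reversible_factor_length_le (x : List (Fin 3))
    (hx : InfFactor x fOmega) (hxr : InfFactor x.reverse fOmega) :
    x.length ≤ 18 := by
  by_contra! h
  set y := x.take 19
  have hy : y.length = 19 := by simp [y]; omega
  have hyr : InfFactor y.reverse fOmega := by
    rw [List.reverse_take, ← List.length_reverse]
    exact hxr.drop _
  obtain ⟨a, b, r, hr, hab⟩ := (hx.take 19).exists_eq_take_drop_append length_fMorph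
    fOmega_eq_getD (by norm_num) ((List.length_take_le 19 x).trans (by norm_num))
  obtain ⟨a', b', r', hr', hab'⟩ := hyr.exists_eq_take_drop_append length_fMorph
    fOmega_eq_getD (by norm_num) (by simp [hy])
  rw [hy] at hab
  rw [List.length_reverse, hy] at hab'
  exact fMorph_windows_ne_reverse a' b' a b r' hr' r hr (by rw [← hab, ← hab'])
end

section
/- For the unary patterns x^m: λ_≃(x²) = 3, λ_≃(x³) = 3, and λ_≃(x^m) = 2 for every m ≥ 4. That is: there is an infinite ternary word avoiding xx up to ≃ but no infinite binary word does; there is an infinite ternary word avoiding xxx up to ≃ but no infinite binary word does; and for every m ≥ 4 there is an infinite binary word avoiding x^m up to ≃ (while no infinite unary word avoids any x^m). -/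
/-- Reversal-equivalence of words: `x ≃ x'` iff `x' = x` or `x'` is the reversal of `x`. -/
def SimRev {A : Type*} (x x' : List A) : Prop := x' = x ∨ x' = x.reverse

/-- The infinite word `w` encounters the pattern `p` up to the relation `sim`:
`w` has a factor `X₁X₂⋯Xₙ` with each `Xᵢ` nonempty and `sim Xᵢ Xⱼ` whenever `pᵢ = pⱼ`. -/
def Encounters {V A : Type*} (sim : List A → List A → Prop) (p : List V) (w : ℕ → A) : Prop :=
  ∃ X : List (List A), X.length = p.length ∧ (∀ x ∈ X, x ≠ []) ∧
    InfFactor X.flatten w ∧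
    ∀ i j : ℕ, i < p.length → j < p.length → p[i]? = p[j]? →
      sim (X.getD i []) (X.getD j [])

/-- The avoidability index of the unary pattern `x^m` up to `≃`: the least `k` such
that some infinite word over a `k`-letter alphabet avoids `x^m` up to `≃`. -/
noncomputable def lamRevUnary (m : ℕ) : ℕ :=
  sInf {k : ℕ | ∃ w : ℕ → Fin k, ¬ Encounters SimRev (List.replicate m ()) w}

/-!
Encountering `x^m` up to `≃` amounts to having a factor `X₀X₁⋯X_{m-1}` whose blocks have a common
length and are all `≃ X₀`.

The first difference of the Thue–Morse word is square-free because Thue–Morse is overlap-free, and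
a square-free word also avoids `xxᴿ`, since `XXᴿ` has a square of a letter in its middle.

For `m ≥ 4` take the fixed point of `a ↦ a ā ā ā a`. Its triples `aaa` sit exactly at the positions
`≡ 1 (mod 5)`. A block of length `≥ 7` contains such a triple, and following it into the other
three blocks, forwards or backwards, forces the block length to be a multiple of `5`, and also the
start of the factor unless all blocks are plain copies (then the factor can be shifted). So the
factor comes from a shorter one in the preimage, and the argument descends. Short blocks are
excluded by checking all factors of length `24`.

The lower bounds are exhaustive checks: every binary word of length `4` (resp. `10`) contains a
square (resp. cube) up to `≃`, and unary words contain every power.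
-/

section Window

variable {A : Type*}

def window (w : ℕ → A) (i n : ℕ) : List A := (List.range n).map fun l => w (i + l)

@[simp] theorem length_window (w : ℕ → A) (i n : ℕ) : (window w i n).length = n := by
  simp [window]

theorem window_add (w : ℕ → A) (i a b : ℕ) :
    window w i (a + b) = window w i a ++ window w (i + a) b := by
  simp [window, List.range_add, Nat.add_assoc]

theorem window_succ (w : ℕ → A) (i n : ℕ) : window w i (n + 1) = w i :: window w (i + 1) n := by
  simp [window, List.range_succ_eq_map, Nat.add_assoc, Nat.add_comm 1]

theorem getD_window (w : ℕ → A) {i n x : ℕ} (d : A) (hx : x < n) :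
    (window w i n).getD x d = w (i + x) := by
  simp [window, hx]

theorem window_eq_window_iff (w : ℕ → A) (i j n : ℕ) :
    window w j n = window w i n ↔ ∀ l < n, w (j + l) = w (i + l) := by
  simp [window, List.map_inj_left]

theorem window_eq_reverse_window_iff (w : ℕ → A) (i j n : ℕ) :
    window w j n = (window w i n).reverse ↔ ∀ l < n, w (j + l) = w (i + (n - 1 - l)) := by
  simp [List.ext_getElem_iff, window]

theorem flatten_map_window (w : ℕ → A) (m n : ℕ) :
    ((List.range m).map fun k => window w (k * n) n).flatten = window w 0 (m * n) := by
  induction m with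
  | zero => simp [window]
  | succ m ih => simp [List.range_succ, ih, Nat.succ_mul, window_add]

theorem window_mem_sections (w : ℕ → A) {S : List A} (hS : ∀ a, a ∈ S) (i N : ℕ) :
    window w i N ∈ (List.replicate N S).sections := by
  rw [List.mem_sections]
  induction N generalizing i with
  | zero => simp [window]
  | succ N ih =>
    rw [window_succ, List.replicate_succ]
    exact .cons (hS _) (ih _)

theorem take_drop_window (w : ℕ → A) {i d L N : ℕ} (h : d + L ≤ N) :
    ((window w i N).drop d).take L = window w (i + d) L := by
  obtain ⟨e, rfl⟩ := Nat.exists_eq_add_of_le h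
  rw [add_assoc, window_add, List.drop_left' (length_window ..), window_add,
    List.take_left' (length_window ..)]

theorem simRev_window_iff (v : ℕ → A) (j n : ℕ) :
    SimRev (window v 0 n) (window v j n) ↔
      (∀ l < n, v (j + l) = v l) ∨ (∀ l < n, v (j + l) = v (n - 1 - l)) := by
  simp [SimRev, window_eq_window_iff, window_eq_reverse_window_iff]

theorem SimRev.of_common {u x y : List A} (hx : SimRev u x) (hy : SimRev u y) : SimRev x y := by
  rcases hx with rfl | rfl <;> rcases hy with rfl | rfl <;> simp [SimRev]

end Window

section RevPower

variable {A B : Type*}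

/-- `v` begins with `X₀X₁⋯X_{m-1}`, where `|Xₖ| = n` and each `Xₖ` is `X₀` or its reversal. -/
def IsRevPowerPrefix (v : ℕ → A) (m n : ℕ) : Prop :=
  ∀ k < m, (∀ l < n, v (k * n + l) = v l) ∨ (∀ l < n, v (k * n + l) = v (n - 1 - l))

instance [DecidableEq A] (v : ℕ → A) (m n : ℕ) : Decidable (IsRevPowerPrefix v m n) := by
  unfold IsRevPowerPrefix; infer_instance

def IsPowerPrefix (v : ℕ → A) (m n : ℕ) : Prop :=
  ∀ k < m, ∀ l < n, v (k * n + l) = v l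

variable {v v' : ℕ → A} {m n : ℕ}

theorem IsPowerPrefix.isRevPowerPrefix (h : IsPowerPrefix v m n) : IsRevPowerPrefix v m n :=
  fun k hk => .inl (h k hk)

theorem IsRevPowerPrefix.mono (h : IsRevPowerPrefix v m n) {m' : ℕ} (hm : m' ≤ m) :
    IsRevPowerPrefix v m' n :=
  fun k hk => h k (hk.trans_le hm)

theorem IsRevPowerPrefix.congr (h : IsRevPowerPrefix v m n) (hv : ∀ x < m * n, v x = v' x) :
    IsRevPowerPrefix v' m n := by
  intro k hk
  have hv' : ∀ x < (k + 1) * n, v x = v' x := fun x hx =>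
    hv x (hx.trans_le (Nat.mul_le_mul_right n hk))
  have hkn : ∀ l < n, k * n + l < (k + 1) * n := fun l hl => by rw [Nat.succ_mul]; omega
  have hl : ∀ l < n, l < (k + 1) * n := fun l hl => by rw [Nat.succ_mul]; omega
  refine (h k hk).imp (fun hf l hln => ?_) (fun hr l hln => ?_)
  · rw [← hv' _ (hkn l hln), ← hv' _ (hl l hln), hf l hln]
  · rw [← hv' _ (hkn l hln), ← hv' _ (hl _ (by omega)), hr l hln]

theorem IsRevPowerPrefix.of_comp {f : A → B} (hf : Function.Injective f)
    (h : IsRevPowerPrefix (fun x => f (v x)) m n) : IsRevPowerPrefix v m n :=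
  fun k hk => (h k hk).imp (fun h l hl => hf (h l hl)) (fun h l hl => hf (h l hl))

theorem eq_map_window_of_flatten_eq {X : List (List A)} (hX : ∀ x ∈ X, x.length = n)
    (h : X.flatten = window v 0 (X.length * n)) :
    X = (List.range X.length).map fun k => window v (k * n) n := by
  have hlens : X.map List.length = List.replicate X.length n :=
    List.eq_replicate_iff.2 ⟨by simp, by simpa using hX⟩
  rw [List.eq_iff_flatten_eq, flatten_map_window, hlens]
  exact ⟨h, (List.eq_replicate_iff.2 ⟨by simp, by simp⟩).symm⟩

theorem encounters_replicate_iff (w : ℕ → A) (m : ℕ) :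
    Encounters SimRev (List.replicate m ()) w ↔
      ∃ i n, 0 < n ∧ IsRevPowerPrefix (fun x => w (i + x)) m n := by
  constructor
  · rintro ⟨X, hlen, hne, ⟨i, hX⟩, hsim⟩
    rw [List.length_replicate] at hlen
    rcases Nat.eq_zero_or_pos m with rfl | hm
    · exact ⟨0, 1, one_pos, fun k hk => absurd hk (Nat.not_lt_zero k)⟩
    set n := (X.getD 0 []).length
    have hsim0 : ∀ k < m, SimRev (X.getD 0 []) (X.getD k []) := fun k hk =>
      hsim 0 k (by simpa) (by simpa) (by simp [hm, hk])
    have hlen' : ∀ x ∈ X, x.length = n := by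
      intro x hx
      obtain ⟨k, hk, rfl⟩ := List.mem_iff_getElem.1 hx
      rw [← List.getD_eq_getElem _ [] hk]
      rcases hsim0 k (hlen ▸ hk) with h | h <;> rw [h]
      exact List.length_reverse
    have hXw : X = (List.range m).map fun k => window (fun x => w (i + x)) (k * n) n := by
      rw [← hlen]
      refine eq_map_window_of_flatten_eq hlen' ?_
      rw [hX, List.length_flatten, List.map_congr_left hlen']
      simp [window]
    have h0 : X.getD 0 [] ∈ X := by
      rw [List.getD_eq_getElem _ _ (by omega)]
      exact List.getElem_mem _
    refine ⟨i, n, List.length_pos_iff.2 (hne _ h0), fun k hk => ?_⟩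
    have hk' := hsim0 k hk
    rw [hXw] at hk'
    simpa [hk, hm] using (simRev_window_iff _ (k * n) n).1 (by simpa [hk, hm] using hk')
  · rintro ⟨i, n, hn, h⟩
    refine ⟨(List.range m).map fun k => window (fun x => w (i + x)) (k * n) n, by simp,
      ?_, ⟨i, ?_⟩, ?_⟩
    · simp [← List.length_pos_iff, hn]
    · rw [flatten_map_window, length_window]
      simp [window]
    · intro a b ha hb _
      simp only [List.length_replicate] at ha hb
      simp only [List.getD_eq_getElem?_getD, List.getElem?_map, List.getElem?_range, ha, hb,
        Option.map_some, Option.getD_some]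
      exact .of_common ((simRev_window_iff _ _ _).2 (h a ha)) ((simRev_window_iff _ _ _).2 (h b hb))

end RevPower

section DigitParity

def digitParity (b : ℕ) (D : ℕ → Bool) (n : ℕ) : Bool :=
  ((Nat.digits b n).countP D).bodd

theorem digitParity_mul_add {b : ℕ} (hb : 1 < b) {D : ℕ → Bool} (hD : D 0 = false) (t : ℕ)
    {r : ℕ} (hr : r < b) : digitParity b D (b * t + r) = xor (D r) (digitParity b D t) := by
  by_cases h : r = 0 ∧ t = 0
  · obtain ⟨rfl, rfl⟩ := h
    simp [hD]
  · rw [add_comm, digitParity, Nat.digits_add b hb r t hr (by tauto), List.countP_cons,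
      Nat.bodd_add, digitParity]
    cases D r <;> simp

end DigitParity

section ThueMorse

def thueMorse (n : ℕ) : Bool := digitParity 2 (· == 1) n

theorem thueMorse_two_mul_add (s : ℕ) {r : ℕ} (hr : r < 2) :
    thueMorse (2 * s + r) = xor (r == 1) (thueMorse s) :=
  digitParity_mul_add one_lt_two rfl s hr

theorem thueMorse_two_mul (s : ℕ) : thueMorse (2 * s) = thueMorse s := by
  simpa using thueMorse_two_mul_add s two_pos

theorem thueMorse_two_mul_add_one (s : ℕ) : thueMorse (2 * s + 1) = !thueMorse s := by
  simpa using thueMorse_two_mul_add s one_lt_two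

theorem thueMorse_not_cube_letter (i : ℕ) :
    ¬ (thueMorse i = thueMorse (i + 1) ∧ thueMorse (i + 1) = thueMorse (i + 2)) := by
  obtain ⟨s, rfl | rfl⟩ : ∃ s, i = 2 * s ∨ i = 2 * s + 1 := ⟨i / 2, by omega⟩
  · rintro ⟨h, -⟩
    rw [thueMorse_two_mul, thueMorse_two_mul_add_one] at h
    simp at h
  · rintro ⟨-, h⟩
    rw [show 2 * s + 1 + 1 = 2 * (s + 1) by ring, show 2 * s + 1 + 2 = 2 * (s + 1) + 1 by ring,
      thueMorse_two_mul, thueMorse_two_mul_add_one] at h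
    simp at h

theorem thueMorse_overlap_half {i m : ℕ}
    (h : ∀ l ≤ 2 * m, thueMorse (i + 2 * m + l) = thueMorse (i + l)) :
    ∀ l ≤ m, thueMorse (i / 2 + m + l) = thueMorse (i / 2 + l) := by
  intro l hl
  have hl' := h (2 * l) (by omega)
  rw [show i + 2 * m + 2 * l = 2 * (i / 2 + m + l) + i % 2 by omega,
    show i + 2 * l = 2 * (i / 2 + l) + i % 2 by omega, thueMorse_two_mul_add _ (i.mod_lt two_pos),
    thueMorse_two_mul_add _ (i.mod_lt two_pos)] at hl'
  exact Bool.xor_right_inj.1 hl'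

theorem thueMorse_not_overlap_odd {i e : ℕ}
    (h : ∀ l ≤ 2 * e + 1, thueMorse (i + (2 * e + 1) + l) = thueMorse (i + l)) : False := by
  rcases Nat.eq_zero_or_pos e with rfl | he
  · have h0 := h 0 (by omega)
    have h1 := h 1 (by omega)
    norm_num [add_assoc] at h0 h1
    exact thueMorse_not_cube_letter i ⟨h0.symm, h1.symm⟩
  obtain ⟨s, d, hd, hs⟩ : ∃ s d, d ≤ 1 ∧ i + d = 2 * s := ⟨(i + 1) / 2, i % 2, by omega, by omega⟩
  have h0 := h d (by omega)
  have h1 := h (d + 1) (by omega)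
  have h2 := h (d + 2) (by omega)
  rw [show i + (2 * e + 1) + d = 2 * (s + e) + 1 by omega, hs, thueMorse_two_mul_add_one,
    thueMorse_two_mul] at h0
  rw [show i + (2 * e + 1) + (d + 1) = 2 * (s + e + 1) by omega,
    show i + (d + 1) = 2 * s + 1 by omega, thueMorse_two_mul_add_one, thueMorse_two_mul] at h1
  rw [show i + (2 * e + 1) + (d + 2) = 2 * (s + e + 1) + 1 by omega,
    show i + (d + 2) = 2 * (s + 1) by omega, thueMorse_two_mul_add_one, thueMorse_two_mul] at h2
  rcases Nat.lt_or_ge e 2 with he2 | he2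
  · obtain rfl : e = 1 := by omega
    cases thueMorse s <;> cases thueMorse (s + 1) <;> cases thueMorse (s + 2) <;> simp_all
  · -- for `e ≥ 2` the overlap forces the letter cube at `s + e`
    have h3 := h (d + 3) (by omega)
    rw [show i + (2 * e + 1) + (d + 3) = 2 * (s + e + 2) by omega,
      show i + (d + 3) = 2 * (s + 1) + 1 by omega, thueMorse_two_mul_add_one,
      thueMorse_two_mul] at h3
    refine thueMorse_not_cube_letter (s + e) ⟨?_, ?_⟩ <;>
      cases thueMorse s <;> cases thueMorse (s + 1) <;> simp_all

theorem thueMorse_overlapFree {n : ℕ} (hn : 0 < n) (i : ℕ) :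
    ¬ ∀ l ≤ n, thueMorse (i + n + l) = thueMorse (i + l) := by
  induction n using Nat.strong_induction_on generalizing i with
  | _ n ih =>
    intro h
    obtain ⟨m, rfl | rfl⟩ := Nat.even_or_odd' n
    · exact ih m (by omega) (by omega) (i / 2) (thueMorse_overlap_half h)
    · exact thueMorse_not_overlap_odd h

end ThueMorse

section TernaryWord

/-- The first difference `thueMorse (n + 1) - thueMorse n` of the Thue–Morse word, with the
values `0, -1, 1` coded as `0, 1, 2`. -/
def ternaryWord (n : ℕ) : Fin 3 :=
  if thueMorse n = thueMorse (n + 1) then 0 else if thueMorse n then 1 else 2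

theorem ternaryWord_eq_iff (a b : ℕ) :
    ternaryWord a = ternaryWord b ↔
      ((thueMorse (a + 1)).toNat : ℤ) - (thueMorse a).toNat =
        (thueMorse (b + 1)).toNat - (thueMorse b).toNat := by
  unfold ternaryWord
  cases thueMorse a <;> cases thueMorse (a + 1) <;> cases thueMorse b <;>
    cases thueMorse (b + 1) <;> decide

theorem ternaryWord_squarefree {n : ℕ} (hn : 0 < n) (i : ℕ) :
    ¬ ∀ l < n, ternaryWord (i + n + l) = ternaryWord (i + l) := by
  intro h
  set T : ℕ → ℤ := fun k => (thueMorse k).toNat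
  have hconst : ∀ l ≤ n, T (i + n + l) - T (i + l) = T (i + n) - T i := by
    intro l hl
    induction l with
    | zero => simp
    | succ l ih =>
      have hl' := (ternaryWord_eq_iff _ _).1 (h l (by omega))
      rw [← add_assoc, ← add_assoc]
      linarith [ih (by omega)]
  have hT01 : ∀ k, T k = 0 ∨ T k = 1 := fun k => by cases thueMorse k <;> simp [T]
  have hTinj : ∀ a b, T a = T b → thueMorse a = thueMorse b := fun a b => by
    cases ha : thueMorse a <;> cases hb : thueMorse b <;> simp [T, ha, hb]
  by_cases hc : T (i + n) = T i
  · exact thueMorse_overlapFree hn i fun l hl => hTinj _ _ (by linarith [hconst l hl])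
  · -- otherwise `T` would move by `2 * (T (i + n) - T i) = ±2` from `i` to `i + 2 * n`
    have := hconst n le_rfl
    have := hT01 i
    have := hT01 (i + n)
    have := hT01 (i + n + n)
    omega

end TernaryWord

theorem ternaryWord_not_encounters {m : ℕ} (hm : 2 ≤ m) :
    ¬ Encounters SimRev (List.replicate m ()) ternaryWord := by
  rw [encounters_replicate_iff]
  rintro ⟨i, n, hn, h⟩
  rcases h 1 (by omega) with hf | hr
  · exact ternaryWord_squarefree hn i fun l hl => by simpa [add_assoc] using hf l hl
  · have h0 := hr 0 hn
    refine ternaryWord_squarefree one_pos (i + n - 1) fun l hl => ?_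
    obtain rfl : l = 0 := by omega
    simpa [show i + n - 1 + 1 = i + n by omega, show i + (n - 1) = i + n - 1 by omega] using h0

section BinaryWord

def binaryMorphism (a : Bool) : List Bool := [a, !a, !a, !a, a]

/-- The fixed point of `binaryMorphism` starting with `false`. -/
def binaryWord (n : ℕ) : Bool := digitParity 5 (fun d => 1 ≤ d && d ≤ 3) n

theorem binaryWord_five_mul_add (t : ℕ) {r : ℕ} (hr : r < 5) :
    binaryWord (5 * t + r) = xor (1 ≤ r && r ≤ 3) (binaryWord t) :=
  digitParity_mul_add (by norm_num) rfl t hr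

theorem binaryWord_five_mul (t : ℕ) : binaryWord (5 * t) = binaryWord t := by
  simpa using binaryWord_five_mul_add t (r := 0) (by norm_num)

theorem window_binaryWord_five_mul (t L : ℕ) :
    window binaryWord (5 * t) (5 * L) = (window binaryWord t L).flatMap binaryMorphism := by
  induction L with
  | zero => simp [window]
  | succ L ih =>
    have hblock : window binaryWord (5 * (t + L)) 5 = binaryMorphism (binaryWord (t + L)) := by
      simp [window, List.range_succ, binaryMorphism, binaryWord_five_mul_add,
        binaryWord_five_mul]
    rw [mul_add, mul_one, window_add, ih, window_add, List.flatMap_append, ← mul_add, hblock]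
    simp [window]

theorem binaryWord_triple_iff (s : ℕ) :
    binaryWord s = binaryWord (s + 1) ∧ binaryWord (s + 1) = binaryWord (s + 2) ↔ s % 5 = 1 := by
  obtain ⟨t, r, hr, rfl⟩ : ∃ t r, r < 5 ∧ s = 5 * t + r := ⟨s / 5, s % 5, by omega, by omega⟩
  have hw : ∀ j < 10, binaryWord (5 * t + j) =
      (binaryMorphism (binaryWord t) ++ binaryMorphism (binaryWord (t + 1))).getD j false := by
    intro j hj
    rw [← getD_window binaryWord (i := 5 * t) false hj, show 10 = 5 * 2 by rfl,
      window_binaryWord_five_mul]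
    simp [window, List.range_succ]
  rw [add_assoc, add_assoc, hw r (by omega), hw (r + 1) (by omega), hw (r + 2) (by omega),
    show (5 * t + r) % 5 = r by omega]
  interval_cases r <;> cases binaryWord t <;> cases binaryWord (t + 1) <;> simp [binaryMorphism]

end BinaryWord

section BinaryWordAvoidance

def morphicFactors (F : List (List Bool)) (L : ℕ) : List (List Bool) :=
  F.flatMap fun u => (List.range 5).map fun r => ((u.flatMap binaryMorphism).drop r).take L

theorem window_binaryWord_mem_morphicFactors {F : List (List Bool)} {L L' : ℕ}
    (hF : ∀ t, window binaryWord t L ∈ F) (hL : L' + 4 ≤ 5 * L) (i : ℕ) :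
    window binaryWord i L' ∈ morphicFactors F L' := by
  obtain ⟨t, r, hr, rfl⟩ : ∃ t r, r < 5 ∧ i = 5 * t + r := ⟨i / 5, i % 5, by omega, by omega⟩
  simp only [morphicFactors, List.mem_flatMap, List.mem_map, List.mem_range]
  refine ⟨_, hF t, r, hr, ?_⟩
  rw [← window_binaryWord_five_mul, take_drop_window _ (by omega)]

def factors24 : List (List Bool) :=
  morphicFactors (morphicFactors (List.replicate 2 [false, true]).sections 6) 24

theorem window_binaryWord_mem_factors24 (i : ℕ) : window binaryWord i 24 ∈ factors24 :=
  window_binaryWord_mem_morphicFactors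
    (window_binaryWord_mem_morphicFactors
      (window_mem_sections _ (fun a => by cases a <;> simp) · 2) (by norm_num)) (by norm_num) i

theorem not_isRevPowerPrefix_of_mem_factors24 :
    ∀ u ∈ factors24, ∀ n ≤ 6, 0 < n → ¬ IsRevPowerPrefix (fun x => u.getD x false) 4 n := by
  decide +kernel

theorem binaryWord_revPowerPrefix_descend {i m n : ℕ}
    (h : IsRevPowerPrefix (fun x => binaryWord (5 * i + x)) m (5 * n)) :
    IsRevPowerPrefix (fun x => binaryWord (i + x)) m n := by
  intro k hk
  refine (h k hk).imp (fun hf l hl => ?_) (fun hr l hl => ?_)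
  · have := hf (5 * l) (by omega)
    dsimp only at this ⊢
    rwa [show 5 * i + (k * (5 * n) + 5 * l) = 5 * (i + (k * n + l)) by ring,
      show 5 * i + 5 * l = 5 * (i + l) by ring, binaryWord_five_mul, binaryWord_five_mul] at this
  · have := hr (5 * l + 4) (by omega)
    dsimp only at this ⊢
    rw [show 5 * i + (k * (5 * n) + (5 * l + 4)) = 5 * (i + (k * n + l)) + 4 by ring,
      show 5 * i + (5 * n - 1 - (5 * l + 4)) = 5 * (i + (n - 1 - l)) by omega,
      binaryWord_five_mul_add _ (by norm_num), binaryWord_five_mul] at this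
    simpa using this

/-- A power may start anywhere, so it is first moved to the next multiple of `5`. -/
theorem binaryWord_powerPrefix_descend {i m n : ℕ}
    (h : IsPowerPrefix (fun x => binaryWord (i + x)) m (5 * n)) :
    IsPowerPrefix (fun x => binaryWord ((i + 4) / 5 + x)) m n := by
  intro k hk l hl
  have := h k hk (5 * ((i + 4) / 5) - i + 5 * l) (by omega)
  dsimp only at this ⊢
  rwa [show i + (k * (5 * n) + (5 * ((i + 4) / 5) - i + 5 * l)) =
      5 * ((i + 4) / 5 + (k * n + l)) by rw [mul_add, mul_add]; ring_nf; omega,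
    show i + (5 * ((i + 4) / 5) - i + 5 * l) = 5 * ((i + 4) / 5 + l) by omega,
    binaryWord_five_mul, binaryWord_five_mul] at this

theorem binaryWord_block_mod {i m n k : ℕ}
    (h : IsRevPowerPrefix (fun x => binaryWord (i + x)) m n) (hn : 7 ≤ n) (hk : k < m) :
    (∀ l < n, binaryWord (i + (k * n + l)) = binaryWord (i + l)) ∧ k * n % 5 = 0 ∨
      (2 * i + k * n + n) % 5 = 0 := by
  obtain ⟨j, hj, hij⟩ : ∃ j ≤ 4, (i + j) % 5 = 1 := ⟨(6 - i % 5) % 5, by omega, by omega⟩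
  obtain ⟨t0, t1⟩ := (binaryWord_triple_iff (i + j)).2 hij
  -- the triple of block `0` at offset `j` reappears in block `k`, forwards or backwards
  rcases h k hk with hf | hr
  · dsimp only at hf
    refine .inl ⟨hf, ?_⟩
    have := (binaryWord_triple_iff (i + (k * n + j))).1
      ⟨(hf j (by omega)).trans (t0.trans (hf (j + 1) (by omega)).symm),
        (hf (j + 1) (by omega)).trans (t1.trans (hf (j + 2) (by omega)).symm)⟩
    generalize k * n = kn at *
    omega
  · dsimp only at hr
    right
    have r0 : binaryWord (i + (k * n + (n - 3 - j))) = binaryWord (i + j + 2) := by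
      rw [hr _ (by omega)]; congr 1; omega
    have r1 : binaryWord (i + (k * n + (n - 3 - j)) + 1) = binaryWord (i + j + 1) := by
      rw [show i + (k * n + (n - 3 - j)) + 1 = i + (k * n + (n - 2 - j)) by omega,
        hr _ (by omega)]; congr 1; omega
    have r2 : binaryWord (i + (k * n + (n - 3 - j)) + 2) = binaryWord (i + j) := by
      rw [show i + (k * n + (n - 3 - j)) + 2 = i + (k * n + (n - 1 - j)) by omega,
        hr _ (by omega)]; congr 1; omega
    have := (binaryWord_triple_iff (i + (k * n + (n - 3 - j)))).1
      ⟨r0.trans (t1.symm.trans r1.symm), r1.trans (t0.symm.trans r2.symm)⟩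
    generalize k * n = kn at *
    omega

theorem binaryWord_not_isRevPowerPrefix {n : ℕ} (hn : 0 < n) (i : ℕ) :
    ¬ IsRevPowerPrefix (fun x => binaryWord (i + x)) 4 n := by
  induction n using Nat.strong_induction_on generalizing i with
  | _ n ih =>
    intro h
    rcases Nat.lt_or_ge n 7 with hn7 | hn7
    · exact not_isRevPowerPrefix_of_mem_factors24 _ (window_binaryWord_mem_factors24 i) n
        (by omega) hn (h.congr fun x hx => (getD_window _ _ (by omega)).symm)
    have hmod := fun k (hk : k < 4) => binaryWord_block_mod h hn7 hk
    have hn5 : n % 5 = 0 := by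
      rcases hmod 1 (by omega) with ⟨-, h1⟩ | h1 <;>
        rcases hmod 2 (by omega) with ⟨-, h2⟩ | h2 <;>
        rcases hmod 3 (by omega) with ⟨-, h3⟩ | h3 <;> omega
    obtain ⟨q, rfl⟩ : ∃ q, n = 5 * q := ⟨n / 5, by omega⟩
    by_cases hF : IsPowerPrefix (fun x => binaryWord (i + x)) 4 (5 * q)
    · exact ih q (by omega) (by omega) _ (binaryWord_powerPrefix_descend hF).isRevPowerPrefix
    · obtain ⟨k, hk, hkF⟩ : ∃ k < 4,
          ¬ ∀ l < 5 * q, binaryWord (i + (k * (5 * q) + l)) = binaryWord (i + l) := by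
        simpa [IsPowerPrefix] using hF
      obtain ⟨c, rfl⟩ : ∃ c, i = 5 * c := by
        rcases hmod k hk with ⟨hf, -⟩ | hk5
        · exact absurd hf hkF
        · exact ⟨i / 5, by interval_cases k <;> omega⟩
      exact ih q (by omega) (by omega) c (binaryWord_revPowerPrefix_descend h)

theorem binaryWord_not_encounters {m : ℕ} (hm : 4 ≤ m) :
    ¬ Encounters SimRev (List.replicate m ()) fun n => finTwoEquiv.symm (binaryWord n) := by
  rw [encounters_replicate_iff]
  rintro ⟨i, n, hn, h⟩
  exact binaryWord_not_isRevPowerPrefix hn i ((h.mono hm).of_comp finTwoEquiv.symm.injective)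

end BinaryWordAvoidance

section LowerBounds

theorem encounters_of_subsingleton {A : Type*} [Subsingleton A] (w : ℕ → A) (m : ℕ) :
    Encounters SimRev (List.replicate m ()) w :=
  (encounters_replicate_iff w m).2 ⟨0, 1, one_pos, fun _ _ => .inl fun _ _ => Subsingleton.elim _ _⟩

theorem encounters_of_forall_mem_sections {m N : ℕ}
    (hcheck : ∀ u ∈ (List.replicate N [false, true]).sections, ∃ i ≤ N, ∃ n ≤ N,
      0 < n ∧ i + m * n ≤ N ∧ IsRevPowerPrefix (fun x => u.getD (i + x) false) m n)
    (w : ℕ → Fin 2) : Encounters SimRev (List.replicate m ()) w := by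
  obtain ⟨i, -, n, -, hn, hN, h⟩ :=
    hcheck _ (window_mem_sections (fun x => finTwoEquiv (w x)) (fun a => by cases a <;> simp) 0 N)
  refine (encounters_replicate_iff w m).2
    ⟨i, n, hn, (h.congr fun x hx => ?_).of_comp finTwoEquiv.injective⟩
  rw [getD_window _ _ (by omega), zero_add]

theorem exists_isRevPowerPrefix_two_of_mem_sections :
    ∀ u ∈ (List.replicate 4 [false, true]).sections, ∃ i ≤ 4, ∃ n ≤ 4,
      0 < n ∧ i + 2 * n ≤ 4 ∧ IsRevPowerPrefix (fun x => u.getD (i + x) false) 2 n := by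
  decide +kernel

theorem exists_isRevPowerPrefix_three_of_mem_sections :
    ∀ u ∈ (List.replicate 10 [false, true]).sections, ∃ i ≤ 10, ∃ n ≤ 10,
      0 < n ∧ i + 3 * n ≤ 10 ∧ IsRevPowerPrefix (fun x => u.getD (i + x) false) 3 n := by
  decide +kernel

end LowerBounds

theorem lamRevUnary_eq {m k : ℕ}
    (havoid : ∃ w : ℕ → Fin k, ¬ Encounters SimRev (List.replicate m ()) w)
    (henc : ∀ j < k, ∀ w : ℕ → Fin j, Encounters SimRev (List.replicate m ()) w) :
    lamRevUnary m = k :=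
  le_antisymm (Nat.sInf_le havoid)
    (le_csInf ⟨k, havoid⟩ fun j ⟨w, hw⟩ => not_lt.1 fun hj => hw (henc j hj w))

/-- `λ_≃(x²) = 3`, `λ_≃(x³) = 3`, and `λ_≃(x^m) = 2` for every `m ≥ 4`: there is an
infinite ternary word avoiding `xx` (resp. `xxx`) up to `≃` but no infinite binary word
does; for every `m ≥ 4` there is an infinite binary word avoiding `x^m` up to `≃`;
and no infinite unary word avoids any `x^m`. -/
theorem lamRev_unary_patterns :
    lamRevUnary 2 = 3 ∧ lamRevUnary 3 = 3 ∧ (∀ m : ℕ, 4 ≤ m → lamRevUnary m = 2) ∧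
    (∃ w : ℕ → Fin 3, ¬ Encounters SimRev (List.replicate 2 ()) w) ∧
    (¬ ∃ w : ℕ → Fin 2, ¬ Encounters SimRev (List.replicate 2 ()) w) ∧
    (∃ w : ℕ → Fin 3, ¬ Encounters SimRev (List.replicate 3 ()) w) ∧
    (¬ ∃ w : ℕ → Fin 2, ¬ Encounters SimRev (List.replicate 3 ()) w) ∧
    (∀ m : ℕ, 4 ≤ m → ∃ w : ℕ → Fin 2, ¬ Encounters SimRev (List.replicate m ()) w) ∧
    (∀ m : ℕ, 1 ≤ m → ¬ ∃ w : ℕ → Fin 1, ¬ Encounters SimRev (List.replicate m ()) w) := by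
  have ternary {m : ℕ} (hm : 2 ≤ m) :
      ∃ w : ℕ → Fin 3, ¬ Encounters SimRev (List.replicate m ()) w :=
    ⟨ternaryWord, ternaryWord_not_encounters hm⟩
  have binary {m : ℕ} (hm : 4 ≤ m) :
      ∃ w : ℕ → Fin 2, ¬ Encounters SimRev (List.replicate m ()) w :=
    ⟨_, binaryWord_not_encounters hm⟩
  have square := encounters_of_forall_mem_sections exists_isRevPowerPrefix_two_of_mem_sections
  have cube := encounters_of_forall_mem_sections exists_isRevPowerPrefix_three_of_mem_sections
  refine ⟨lamRevUnary_eq (ternary le_rfl) ?_, lamRevUnary_eq (ternary (by norm_num)) ?_,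
    fun m hm => lamRevUnary_eq (binary hm) ?_, ternary le_rfl, fun ⟨w, hw⟩ => hw (square w),
    ternary (by norm_num), fun ⟨w, hw⟩ => hw (cube w), fun m => binary,
    fun m _ ⟨w, hw⟩ => hw (encounters_of_subsingleton w m)⟩ <;>
  intro j hj w <;> interval_cases j <;> first
    | exact encounters_of_subsingleton w _ | exact square w | exact cube w
end
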